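/- arXiv:1401.1381 — 2 statements merged into one kernel-verified Lean document; each statement's English description precedes it below -/
import Mathlib

section
/- In the Gram–Schmidt orthogonalization of the columns of the equivalent channel matrix of the 3D MIMO code, the residual vectors satisfy r_2 = h_2, r_3 = h_3 − ⟨q_1,h_3⟩q_1, and r_4 = h_4 − ⟨q_2,h_4⟩q_2. -/
noncomputable section

open scoped InnerProductSpace

namespace MIMO3D

/-- The Golden-code parameter θ = (1+√5)/2. -/
def goldenTheta : ℝ := (1 + Real.sqrt 5) / 2

/-- θ̄ = 1 − θ. -/
def goldenThetaBar : ℝ := 1 - goldenTheta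

/-- α = 1 + i(1−θ). -/
def alpha : ℂ := 1 + Complex.I * (1 - (goldenTheta : ℂ))

/-- ᾱ = 1 + i(1−θ̄). -/
def alphaBar : ℂ := 1 + Complex.I * (1 - (goldenThetaBar : ℂ))

/-- The 3D MIMO codeword matrix X(s), a 4×4 complex matrix built from the
eight information symbols s₁,…,s₈ (here 0-indexed as `s 0`,…,`s 7`). -/
def codeword (s : Fin 8 → ℂ) : Matrix (Fin 4) (Fin 4) ℂ :=
  ((Real.sqrt 5 : ℂ))⁻¹ •
  !![alpha * (s 0 + (goldenTheta : ℂ) * s 1),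
     alpha * (s 2 + (goldenTheta : ℂ) * s 3),
     -(starRingEnd ℂ alpha) * (starRingEnd ℂ (s 4) + (goldenTheta : ℂ) * starRingEnd ℂ (s 5)),
     -(starRingEnd ℂ alpha) * (starRingEnd ℂ (s 6) + (goldenTheta : ℂ) * starRingEnd ℂ (s 7));
     Complex.I * alphaBar * (s 2 + (goldenThetaBar : ℂ) * s 3),
     alphaBar * (s 0 + (goldenThetaBar : ℂ) * s 1),
     Complex.I * (starRingEnd ℂ alphaBar) * (starRingEnd ℂ (s 6) + (goldenThetaBar : ℂ) * starRingEnd ℂ (s 7)),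
     -(starRingEnd ℂ alphaBar) * (starRingEnd ℂ (s 4) + (goldenThetaBar : ℂ) * starRingEnd ℂ (s 5));
     alpha * (s 4 + (goldenTheta : ℂ) * s 5),
     alpha * (s 6 + (goldenTheta : ℂ) * s 7),
     (starRingEnd ℂ alpha) * (starRingEnd ℂ (s 0) + (goldenTheta : ℂ) * starRingEnd ℂ (s 1)),
     (starRingEnd ℂ alpha) * (starRingEnd ℂ (s 2) + (goldenTheta : ℂ) * starRingEnd ℂ (s 3));
     Complex.I * alphaBar * (s 6 + (goldenThetaBar : ℂ) * s 7),
     alphaBar * (s 4 + (goldenThetaBar : ℂ) * s 5),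
     -(Complex.I * (starRingEnd ℂ alphaBar) * (starRingEnd ℂ (s 2) + (goldenThetaBar : ℂ) * starRingEnd ℂ (s 3))),
     (starRingEnd ℂ alphaBar) * (starRingEnd ℂ (s 0) + (goldenThetaBar : ℂ) * starRingEnd ℂ (s 1))]

/-- ṽ(Y): stack the columns of the 2×4 complex matrix Y into ℂ^8
(giving (Y₁₁,Y₂₁,Y₁₂,Y₂₂,Y₁₃,Y₂₃,Y₁₄,Y₂₄)) and replace each complex entry z
by the pair (Re z, Im z), producing a vector of ℝ^16 (Euclidean space). -/
def tildeVec (Y : Matrix (Fin 2) (Fin 4) ℂ) : EuclideanSpace ℝ (Fin 16) :=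
  WithLp.toLp 2 fun (m : Fin 16) =>
    if m.val % 2 = 0 then
      (Y ⟨m.val % 4 / 2, by omega⟩ ⟨m.val / 4, by have := m.isLt; omega⟩).re
    else
      (Y ⟨m.val % 4 / 2, by omega⟩ ⟨m.val / 4, by have := m.isLt; omega⟩).im

/-- Recover the complex symbol vector s ∈ ℂ^8 from its real coordinate vector
s̃ = (Re s₁, Im s₁, …, Re s₈, Im s₈) ∈ ℝ^16. -/
def sOfReal (v : Fin 16 → ℝ) : Fin 8 → ℂ :=
  fun k => (v ⟨2 * k.val, by have := k.isLt; omega⟩ : ℂ)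
    + (v ⟨2 * k.val + 1, by have := k.isLt; omega⟩ : ℂ) * Complex.I

/-- The j-th column h_j (0-indexed: `hcol H j` is h_{j+1} of the paper) of the
equivalent channel matrix H_eq: the image of the j-th standard basis vector of
ℝ^16 under the ℝ-linear map s̃ ↦ ṽ(H · X(s)). -/
def hcol (H : Matrix (Fin 2) (Fin 4) ℂ) (j : Fin 16) : EuclideanSpace ℝ (Fin 16) :=
  tildeVec (H * codeword (sOfReal (Pi.single j 1)))

/-- The Gram–Schmidt residual r_j (0-indexed) of the columns of H_eq:
r_j = h_j − Σ_{k<j} ⟨q_k, h_j⟩ q_k. -/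
def rvec (H : Matrix (Fin 2) (Fin 4) ℂ) (j : Fin 16) : EuclideanSpace ℝ (Fin 16) :=
  have : WellFoundedLT (Fin 16) := inferInstance
  InnerProductSpace.gramSchmidt ℝ (hcol H) j

/-- The Gram–Schmidt orthonormalization q_j = r_j / ‖r_j‖ (0-indexed). -/
def qvec (H : Matrix (Fin 2) (Fin 4) ℂ) (j : Fin 16) : EuclideanSpace ℝ (Fin 16) :=
  have : WellFoundedLT (Fin 16) := inferInstance
  InnerProductSpace.gramSchmidtNormed ℝ (hcol H) j

end MIMO3D

/-!
When only s₁ and s₂ are nonzero the codeword is the diagonal matrix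
diag(α(s₁+θs₂), ᾱ(s₁+θ̄s₂), α*(s₁*+θs₂*), ᾱ*(s₁*+θ̄s₂*))/√5, so h₁,…,h₄ are the
real images of H·diag(d) for four diagonals d. The real inner product of two such
images is Σ |H_ab|² Re(d_b* e_b), and d_b* e_b is purely imaginary as soon as one
diagonal comes from real symbols and the other from imaginary ones. Hence h₁, h₃ are
orthogonal to h₂, h₄, and Gram–Schmidt drops every projection onto a vector
orthogonal to the column being processed.
-/

namespace InnerProductSpace

open Finset Submodule

variable {𝕜 E ι : Type*} [RCLike 𝕜] [NormedAddCommGroup E] [InnerProductSpace 𝕜 E]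
  [LinearOrder ι] [LocallyFiniteOrderBot ι] [WellFoundedLT ι]

theorem starProjection_singleton_eq_inner_smul_normalize (v w : E) :
    (𝕜 ∙ v).starProjection w
      = inner 𝕜 ((‖v‖ : 𝕜)⁻¹ • v) w • ((‖v‖ : 𝕜)⁻¹ • v) := by
  rw [starProjection_singleton, inner_smul_left, smul_smul, RCLike.conj_inv, RCLike.conj_ofReal]
  congr 1
  push_cast
  ring

variable (𝕜) in
theorem gramSchmidt_eq_sub_sum_of_inner_eq_zero (f : ι → E) {n : ι} {s : Finset ι}
    (hs : s ⊆ Iio n) (h : ∀ i ∈ Iio n \ s, inner 𝕜 (gramSchmidt 𝕜 f i) (f n) = 0) :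
    gramSchmidt 𝕜 f n
      = f n - ∑ i ∈ s, inner 𝕜 (gramSchmidtNormed 𝕜 f i) (f n) • gramSchmidtNormed 𝕜 f i := by
  rw [gramSchmidt_def, ← sum_subset hs fun i hi his => by
    rw [starProjection_singleton, h i (mem_sdiff.2 ⟨hi, his⟩), zero_div, zero_smul]]
  simp only [starProjection_singleton_eq_inner_smul_normalize, gramSchmidtNormed]

end InnerProductSpace

namespace MIMO3D

open Matrix ComplexConjugate InnerProductSpace

theorem inner_tildeVec (Y Z : Matrix (Fin 2) (Fin 4) ℂ) :
    ⟪tildeVec Y, tildeVec Z⟫_ℝ = ∑ a, ∑ b, ⟪Y a b, Z a b⟫_ℝ := by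
  simp only [PiLp.inner_apply, tildeVec, Complex.inner, Fin.sum_univ_succ, Fin.sum_univ_zero]
  simp [Complex.mul_re]
  ring

theorem inner_tildeVec_mul_diagonal_eq_zero (H : Matrix (Fin 2) (Fin 4) ℂ) {d e : Fin 4 → ℂ}
    (h : ∀ b, (conj (d b) * e b).re = 0) :
    ⟪tildeVec (H * diagonal d), tildeVec (H * diagonal e)⟫_ℝ = 0 := by
  rw [inner_tildeVec]
  refine Finset.sum_eq_zero fun a _ => Finset.sum_eq_zero fun b _ => ?_
  have hb := h b
  simp only [mul_diagonal, Complex.inner, map_mul, Complex.mul_re, Complex.mul_im,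
    Complex.conj_re, Complex.conj_im] at hb ⊢
  linear_combination ((H a b).re ^ 2 + (H a b).im ^ 2) * hb

def codewordDiag (x y : ℂ) : Fin 4 → ℂ :=
  (Real.sqrt 5 : ℂ)⁻¹ • ![alpha * (x + goldenTheta * y), alphaBar * (x + goldenThetaBar * y),
    conj alpha * (conj x + goldenTheta * conj y), conj alphaBar * (conj x + goldenThetaBar * conj y)]

theorem codeword_eq_diagonal (x y : ℂ) :
    codeword ![x, y, 0, 0, 0, 0, 0, 0] = diagonal (codewordDiag x y) := by
  ext i j
  fin_cases i <;> fin_cases j <;> simp [codeword, codewordDiag]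

theorem re_conj_codewordDiag_mul_eq_zero {x y z w : ℂ} (hx : x.im = 0) (hy : y.im = 0)
    (hz : z.re = 0) (hw : w.re = 0) (b : Fin 4) :
    (conj (codewordDiag x y b) * codewordDiag z w b).re = 0 := by
  fin_cases b <;> simp [codewordDiag, Complex.mul_re, Complex.mul_im, hx, hy, hz, hw] <;> ring

theorem hcol_eq_tildeVec_codewordDiag (H : Matrix (Fin 2) (Fin 4) ℂ) {j : Fin 16} {x y : ℂ}
    (h : sOfReal (Pi.single j 1) = ![x, y, 0, 0, 0, 0, 0, 0]) :
    hcol H j = tildeVec (H * diagonal (codewordDiag x y)) := by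
  rw [hcol, h, codeword_eq_diagonal]

theorem inner_hcol_eq_zero (H : Matrix (Fin 2) (Fin 4) ℂ) {i j : Fin 16}
    (hi : i = 0 ∨ i = 2) (hj : j = 1 ∨ j = 3) : ⟪hcol H i, hcol H j⟫_ℝ = 0 := by
  obtain ⟨x, y, hx, hy, hi⟩ : ∃ x y : ℂ, x.im = 0 ∧ y.im = 0 ∧
      sOfReal (Pi.single i 1) = ![x, y, 0, 0, 0, 0, 0, 0] := by
    rcases hi with rfl | rfl
    exacts [⟨1, 0, by simp, by simp, by ext k; fin_cases k <;> simp [sOfReal]⟩,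
      ⟨0, 1, by simp, by simp, by ext k; fin_cases k <;> simp [sOfReal]⟩]
  obtain ⟨z, w, hz, hw, hj⟩ : ∃ z w : ℂ, z.re = 0 ∧ w.re = 0 ∧
      sOfReal (Pi.single j 1) = ![z, w, 0, 0, 0, 0, 0, 0] := by
    rcases hj with rfl | rfl
    exacts [⟨Complex.I, 0, by simp, by simp, by ext k; fin_cases k <;> simp [sOfReal]⟩,
      ⟨0, Complex.I, by simp, by simp, by ext k; fin_cases k <;> simp [sOfReal]⟩]
  rw [hcol_eq_tildeVec_codewordDiag H hi, hcol_eq_tildeVec_codewordDiag H hj]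
  exact inner_tildeVec_mul_diagonal_eq_zero H (re_conj_codewordDiag_mul_eq_zero hx hy hz hw)

theorem rvec_eq_gramSchmidt (H : Matrix (Fin 2) (Fin 4) ℂ) : rvec H = gramSchmidt ℝ (hcol H) :=
  rfl

theorem qvec_eq_gramSchmidtNormed (H : Matrix (Fin 2) (Fin 4) ℂ) :
    qvec H = gramSchmidtNormed ℝ (hcol H) :=
  rfl

end MIMO3D

open MIMO3D InnerProductSpace Finset

theorem stmt8_general (H : Matrix (Fin 2) (Fin 4) ℂ) :
    rvec H 1 = hcol H 1 ∧
    rvec H 2 = hcol H 2 - ⟪qvec H 0, hcol H 2⟫_ℝ • qvec H 0 ∧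
    rvec H 3 = hcol H 3 - ⟪qvec H 1, hcol H 3⟫_ℝ • qvec H 1 := by
  rw [rvec_eq_gramSchmidt, qvec_eq_gramSchmidtNormed]
  have r0 : gramSchmidt ℝ (hcol H) 0 = hcol H 0 := gramSchmidt_bot ℝ (hcol H)
  have r1 : gramSchmidt ℝ (hcol H) 1 = hcol H 1 := by
    simpa using gramSchmidt_eq_sub_sum_of_inner_eq_zero ℝ (hcol H) (empty_subset (Iio 1))
      (by simp [show Iio (1 : Fin 16) \ ∅ = {0} by decide, r0, inner_hcol_eq_zero H])
  have r2 := gramSchmidt_eq_sub_sum_of_inner_eq_zero ℝ (hcol H) (n := 2) (s := {0}) (by decide)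
    (by simp [show Iio (2 : Fin 16) \ {0} = {1} by decide, r1, real_inner_comm,
      inner_hcol_eq_zero H])
  have r3 := gramSchmidt_eq_sub_sum_of_inner_eq_zero ℝ (hcol H) (n := 3) (s := {1}) (by decide)
    (by simp [show Iio (3 : Fin 16) \ {1} = {0, 2} by decide, r0, r2, gramSchmidtNormed,
      inner_sub_left, real_inner_smul_left, inner_hcol_eq_zero H])
  exact ⟨r1, by simpa using r2, by simpa using r3⟩

/-- The Gram–Schmidt residuals satisfy r₂ = h₂,
r₃ = h₃ − ⟨q₁,h₃⟩q₁ and r₄ = h₄ − ⟨q₂,h₄⟩q₂ (paper's 1-based indices;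
0-indexed here: r₁ = `rvec H 1`, etc.). -/
theorem stmt8 (H : Matrix (Fin 2) (Fin 4) ℂ) (hLI : LinearIndependent ℝ (hcol H)) :
    rvec H 1 = hcol H 1 ∧
    rvec H 2 = hcol H 2 - ⟪qvec H 0, hcol H 2⟫_ℝ • qvec H 0 ∧
    rvec H 3 = hcol H 3 - ⟪qvec H 1, hcol H 3⟫_ℝ • qvec H 1 :=
  stmt8_general H
end
end

section
/- In the QR decomposition H_eq = QR of the equivalent channel matrix of the 3D MIMO code, the following antisymmetry identities hold: ⟨q_{j+1},h_k⟩ = −⟨q_j,h_{k+1}⟩ for all j ∈ {5,7} and k ∈ {9,11}. -/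
noncomputable section

open scoped InnerProductSpace

/-!
Replacing a symbol `s_t` by `i s_t` multiplies the codeword on the right by
`D = diag(i, i, -i, -i)`: the first two columns of `X(s)` are ℂ-linear in `s`, the last two
conjugate-linear. In the real coordinates `ṽ` this says `h_{2t} = J h_{2t-1}`, where `J` is
the real form of `Y ↦ Y D`, a signed coordinate permutation that is skew-adjoint with
`J² = -1`. Such a `J` commutes with Gram–Schmidt along each pair: the span of
`h_1, …, h_{2t-2}` is `J`-stable and `J r_{2t-1}` is orthogonal to it and to `h_{2t-1}`, so
`r_{2t} = J r_{2t-1}` and `q_{2t} = J q_{2t-1}`. Hence for odd `j, k`,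
`⟨q_{j+1}, h_k⟩ = ⟨J q_j, h_k⟩ = -⟨q_j, J h_k⟩ = -⟨q_j, h_{k+1}⟩`.
-/

open MIMO3D Complex Submodule InnerProductSpace

section SignedPerm

variable {ι : Type*} (σ : ι → ι) (ε : ι → ℝ)

def signedPerm : EuclideanSpace ℝ ι →ₗ[ℝ] EuclideanSpace ℝ ι where
  toFun v := WithLp.toLp 2 fun m => ε m * v (σ m)
  map_add' v w := by ext m; simp [mul_add]
  map_smul' c v := by ext m; simp [mul_left_comm]

@[simp] lemma signedPerm_apply (v : EuclideanSpace ℝ ι) (m : ι) :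
    signedPerm σ ε v m = ε m * v (σ m) := rfl

variable {σ ε}

lemma inner_signedPerm_left [Fintype ι] (hσ : Function.Involutive σ)
    (hε : ∀ m, ε (σ m) = -ε m) (x y : EuclideanSpace ℝ ι) :
    ⟪signedPerm σ ε x, y⟫_ℝ = -⟪x, signedPerm σ ε y⟫_ℝ := by
  simp only [PiLp.inner_apply, RCLike.inner_apply, conj_trivial, signedPerm_apply,
    ← Finset.sum_neg_distrib]
  refine (Equiv.sum_comp hσ.toPerm _).symm.trans (Finset.sum_congr rfl fun m _ => ?_)
  simp only [Function.Involutive.coe_toPerm, hσ m, hε]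
  ring

lemma signedPerm_signedPerm (hσ : Function.Involutive σ) (hε : ∀ m, ε (σ m) = -ε m)
    (hεsq : ∀ m, ε m ^ 2 = 1) (x : EuclideanSpace ℝ ι) :
    signedPerm σ ε (signedPerm σ ε x) = -x := by
  ext m
  simp only [signedPerm_apply, hσ m, hε, PiLp.neg_apply]
  linear_combination (-x m) * hεsq m

end SignedPerm

section GramSchmidt

variable {E : Type*} [NormedAddCommGroup E] [InnerProductSpace ℝ E]
  {ι : Type*} [LinearOrder ι] [LocallyFiniteOrderBot ι] [WellFoundedLT ι]

theorem gramSchmidt_mem_orthogonal (f : ι → E) (n : ι) :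
    gramSchmidt ℝ f n ∈ (span ℝ (f '' Set.Iio n))ᗮ := by
  refine isOrtho_iff_le.1 (isOrtho_span.2 ?_) (mem_span_singleton_self _)
  rintro _ rfl _ ⟨i, hi, rfl⟩
  exact gramSchmidt_inv_triangular ℝ f hi

theorem sub_gramSchmidt_mem_span (f : ι → E) (n : ι) :
    f n - gramSchmidt ℝ f n ∈ span ℝ (f '' Set.Iio n) := by
  rw [← span_gramSchmidt_Iio ℝ f n]
  nth_rw 1 [gramSchmidt_def' ℝ f n]
  rw [add_sub_cancel_left]
  refine sum_mem fun i hi => ?_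
  have : (ℝ ∙ gramSchmidt ℝ f i) ≤ span ℝ (gramSchmidt ℝ f '' Set.Iio n) :=
    span_mono (Set.singleton_subset_iff.2 ⟨i, Finset.mem_Iio.1 hi, rfl⟩)
  exact this (starProjection_apply_mem _ _)

theorem gramSchmidt_eq_of_sub_mem_span {f : ι → E} {n : ι} {r : E}
    (hsub : f n - r ∈ span ℝ (f '' Set.Iio n)) (horth : r ∈ (span ℝ (f '' Set.Iio n))ᗮ) :
    gramSchmidt ℝ f n = r := by
  rw [← sub_eq_zero, ← mem_bot ℝ, ← inf_orthogonal_eq_bot (span ℝ (f '' Set.Iio n))]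
  refine ⟨?_, sub_mem (gramSchmidt_mem_orthogonal f n) horth⟩
  simpa using sub_mem hsub (sub_gramSchmidt_mem_span f n)

variable {J : E →ₗ[ℝ] E}

lemma inner_self_map_of_skew (hskew : ∀ x y, ⟪J x, y⟫_ℝ = -⟪x, J y⟫_ℝ) (x : E) :
    ⟪x, J x⟫_ℝ = 0 := by
  have := hskew x x
  rw [real_inner_comm] at this
  linarith

lemma norm_map_of_skew (hskew : ∀ x y, ⟪J x, y⟫_ℝ = -⟪x, J y⟫_ℝ) (hsq : ∀ x, J (J x) = -x)
    (x : E) : ‖J x‖ = ‖x‖ := by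
  rw [← sq_eq_sq₀ (norm_nonneg _) (norm_nonneg _), ← real_inner_self_eq_norm_sq,
    ← real_inner_self_eq_norm_sq, hskew, hsq, inner_neg_right, neg_neg]

theorem gramSchmidt_eq_map_of_covBy (hskew : ∀ x y, ⟪J x, y⟫_ℝ = -⟪x, J y⟫_ℝ) {f : ι → E}
    {i j : ι} (hij : i ⋖ j) (hfj : f j = J (f i))
    (hinv : ∀ v ∈ span ℝ (f '' Set.Iio i), J v ∈ span ℝ (f '' Set.Iio i)) :
    gramSchmidt ℝ f j = J (gramSchmidt ℝ f i) := by
  set V := span ℝ (f '' Set.Iio i)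
  set r := gramSchmidt ℝ f i
  have hV : ∀ v ∈ V, ⟪v, J r⟫_ℝ = 0 := fun v hv => by
    rw [real_inner_comm, hskew, neg_eq_zero]
    exact inner_left_of_mem_orthogonal (hinv v hv) (gramSchmidt_mem_orthogonal f i)
  apply gramSchmidt_eq_of_sub_mem_span
  · rw [hfj, ← map_sub]
    exact span_mono (Set.image_mono (Set.Iio_subset_Iio hij.le))
      (hinv _ (sub_gramSchmidt_mem_span f i))
  · rw [hij.Iio_eq, ← Set.Iio_insert, Set.image_insert_eq]
    intro w hw
    obtain ⟨a, z, hz, rfl⟩ := mem_span_insert.1 hw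
    have hfi : ⟪f i, J r⟫_ℝ = 0 := by
      rw [← sub_add_cancel (f i) r, inner_add_left, hV _ (sub_gramSchmidt_mem_span f i),
        inner_self_map_of_skew hskew, add_zero]
    rw [inner_add_left, real_inner_smul_left, hfi, hV z hz, mul_zero, add_zero]

theorem gramSchmidtNormed_eq_map_of_covBy (hskew : ∀ x y, ⟪J x, y⟫_ℝ = -⟪x, J y⟫_ℝ)
    (hsq : ∀ x, J (J x) = -x) {f : ι → E} {i j : ι} (hij : i ⋖ j) (hfj : f j = J (f i))
    (hinv : ∀ v ∈ span ℝ (f '' Set.Iio i), J v ∈ span ℝ (f '' Set.Iio i)) :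
    gramSchmidtNormed ℝ f j = J (gramSchmidtNormed ℝ f i) := by
  simp only [gramSchmidtNormed, gramSchmidt_eq_map_of_covBy hskew hij hfj hinv,
    norm_map_of_skew hskew hsq, map_smul]

end GramSchmidt

namespace MIMO3D

def reImSwap (m : Fin 16) : Fin 16 :=
  if h : m.val % 2 = 0 then ⟨m.val + 1, by omega⟩ else ⟨m.val - 1, by omega⟩

-- `Y ↦ Y * diagonal ![I, I, -I, -I]` multiplies the entries behind the coordinates `m < 8`
-- by `I`, sending `(Re z, Im z)` to `(-Im z, Re z)`, and the others by `-I`.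
def phaseSign (m : Fin 16) : ℝ :=
  if (m.val % 2 = 0) = (m.val < 8) then -1 else 1

abbrev phaseRot : EuclideanSpace ℝ (Fin 16) →ₗ[ℝ] EuclideanSpace ℝ (Fin 16) :=
  signedPerm reImSwap phaseSign

lemma reImSwap_involutive : Function.Involutive reImSwap := by
  intro m; fin_cases m <;> rfl

lemma reImSwap_of_even {m : Fin 16} (hm : m.val % 2 = 0) : reImSwap m = m + 1 := by
  rw [Fin.ext_iff, Fin.val_add_one_of_lt (by rw [Fin.lt_def, Fin.val_last]; omega)]
  simp [reImSwap, hm]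

lemma reImSwap_val_mod_two (m : Fin 16) : (reImSwap m).val % 2 = 0 ↔ m.val % 2 ≠ 0 := by
  unfold reImSwap; split_ifs <;> simp only [ne_eq, Nat.mod_two_not_eq_zero] <;> omega

lemma reImSwap_lt {i m : Fin 16} (hm : m.val % 2 = 0) (hi : i < m) : reImSwap i < m := by
  rw [Fin.lt_def] at hi ⊢; unfold reImSwap; split_ifs <;> dsimp only <;> omega

lemma covBy_reImSwap {m : Fin 16} (hm : m.val % 2 = 0) : m ⋖ reImSwap m := by
  simp [Fin.covBy_iff, reImSwap, hm]

lemma phaseSign_reImSwap (m : Fin 16) : phaseSign (reImSwap m) = -phaseSign m := by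
  fin_cases m <;> norm_num [phaseSign, reImSwap]

lemma phaseSign_sq (m : Fin 16) : phaseSign m ^ 2 = 1 := by
  unfold phaseSign; split_ifs <;> norm_num

lemma inner_phaseRot_left (x y : EuclideanSpace ℝ (Fin 16)) :
    ⟪phaseRot x, y⟫_ℝ = -⟪x, phaseRot y⟫_ℝ :=
  inner_signedPerm_left reImSwap_involutive phaseSign_reImSwap x y

lemma phaseRot_phaseRot (x : EuclideanSpace ℝ (Fin 16)) : phaseRot (phaseRot x) = -x :=
  signedPerm_signedPerm reImSwap_involutive phaseSign_reImSwap phaseSign_sq x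

lemma tildeVec_mul_diagonal (Y : Matrix (Fin 2) (Fin 4) ℂ) :
    tildeVec (Y * Matrix.diagonal ![I, I, -I, -I]) = phaseRot (tildeVec Y) := by
  ext m
  fin_cases m <;> simp [tildeVec, phaseSign, reImSwap, Matrix.mul_diagonal]

lemma codeword_smul_I (s : Fin 8 → ℂ) :
    codeword (I • s) = codeword s * Matrix.diagonal ![I, I, -I, -I] := by
  ext a b
  fin_cases a <;> fin_cases b <;>
    simp only [codeword, Fin.isValue, Fin.zero_eta, Fin.mk_one, Fin.reduceFinMk, Pi.smul_apply,
      smul_eq_mul, map_mul, conj_I, neg_mul, mul_neg, neg_neg, Matrix.smul_apply, Matrix.of_apply,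
      Matrix.cons_val', Matrix.cons_val, Matrix.cons_val_zero, Matrix.cons_val_one,
      Matrix.cons_val_fin_one, Matrix.smul_of, Matrix.smul_cons, Matrix.smul_empty,
      Matrix.mul_diagonal] <;>
    ring

lemma sOfReal_single_reImSwap {m : Fin 16} (hm : m.val % 2 = 0) :
    sOfReal (Pi.single (reImSwap m) 1) = I • sOfReal (Pi.single m 1) := by
  funext k
  simp only [reImSwap, hm, dite_true, sOfReal, Pi.smul_apply, smul_eq_mul, Pi.single_apply,
    Fin.ext_iff]
  split_ifs <;> first | omega | simp

lemma hcol_reImSwap (H : Matrix (Fin 2) (Fin 4) ℂ) {m : Fin 16} (hm : m.val % 2 = 0) :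
    hcol H (reImSwap m) = phaseRot (hcol H m) := by
  rw [hcol, hcol, sOfReal_single_reImSwap hm, codeword_smul_I, ← Matrix.mul_assoc,
    tildeVec_mul_diagonal]

lemma phaseRot_hcol_mem_span (H : Matrix (Fin 2) (Fin 4) ℂ) (i : Fin 16) :
    phaseRot (hcol H i) ∈ ℝ ∙ hcol H (reImSwap i) := by
  by_cases hi : i.val % 2 = 0
  · rw [← hcol_reImSwap H hi]; exact mem_span_singleton_self _
  · have hpi := (reImSwap_val_mod_two i).2 hi
    have hpair := hcol_reImSwap H hpi
    rw [reImSwap_involutive i] at hpair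
    rw [hpair, phaseRot_phaseRot]
    exact neg_mem (mem_span_singleton_self _)

lemma phaseRot_mem_span_hcol {H : Matrix (Fin 2) (Fin 4) ℂ} {m : Fin 16} (hm : m.val % 2 = 0)
    {v : EuclideanSpace ℝ (Fin 16)} (hv : v ∈ span ℝ (hcol H '' Set.Iio m)) :
    phaseRot v ∈ span ℝ (hcol H '' Set.Iio m) := by
  have hgen : hcol H '' Set.Iio m ⊆ (span ℝ (hcol H '' Set.Iio m)).comap phaseRot := by
    rintro _ ⟨i, hi, rfl⟩
    have hsub : (ℝ ∙ hcol H (reImSwap i)) ≤ span ℝ (hcol H '' Set.Iio m) :=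
      span_mono (Set.singleton_subset_iff.2 (Set.mem_image_of_mem (hcol H) (reImSwap_lt hm hi)))
    exact mem_comap.2 (hsub (phaseRot_hcol_mem_span H i))
  exact mem_comap.1 (span_le.2 hgen hv)

lemma qvec_reImSwap (H : Matrix (Fin 2) (Fin 4) ℂ) {m : Fin 16} (hm : m.val % 2 = 0) :
    qvec H (reImSwap m) = phaseRot (qvec H m) :=
  gramSchmidtNormed_eq_map_of_covBy inner_phaseRot_left phaseRot_phaseRot (covBy_reImSwap hm)
    (hcol_reImSwap H hm) fun _ => phaseRot_mem_span_hcol hm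

lemma inner_qvec_add_one_hcol (H : Matrix (Fin 2) (Fin 4) ℂ) {j k : Fin 16}
    (hj : j.val % 2 = 0) (hk : k.val % 2 = 0) :
    ⟪qvec H (j + 1), hcol H k⟫_ℝ = -⟪qvec H j, hcol H (k + 1)⟫_ℝ := by
  rw [← reImSwap_of_even hj, ← reImSwap_of_even hk, qvec_reImSwap H hj, hcol_reImSwap H hk,
    inner_phaseRot_left]

end MIMO3D

theorem stmt10_general (H : Matrix (Fin 2) (Fin 4) ℂ)
    (j k : Fin 16) (hj : j = 4 ∨ j = 6) (hk : k = 8 ∨ k = 10) :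
    ⟪qvec H (j + 1), hcol H k⟫_ℝ = -⟪qvec H j, hcol H (k + 1)⟫_ℝ := by
  apply inner_qvec_add_one_hcol H
  · rcases hj with rfl | rfl <;> rfl
  · rcases hk with rfl | rfl <;> rfl

/-- The antisymmetry identities ⟨q_{j+1},h_k⟩ = −⟨q_j,h_{k+1}⟩
hold for all j ∈ {5,7} and k ∈ {9,11} (paper's 1-based indices; 0-indexed here:
j ∈ {4,6}, k ∈ {8,10}). -/
theorem stmt10 (H : Matrix (Fin 2) (Fin 4) ℂ) (hLI : LinearIndependent ℝ (hcol H))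
    (j k : Fin 16) (hj : j = 4 ∨ j = 6) (hk : k = 8 ∨ k = 10) :
    ⟪qvec H (j + 1), hcol H k⟫_ℝ = -⟪qvec H j, hcol H (k + 1)⟫_ℝ :=
  stmt10_general H j k hj hk
end
end
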